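/- For all x₁, x₂ ∈ [0,1], every ε̃ ≥ 0, and every ε ∈ ℝ such that x₁+ε ∈ [0,1], x₂−ε ∈ [0,1], and |ε| ≤ ε̃, it holds that h_D(x₁, x₂) − h_C(x₁, x₂; ε̃) ≤ h_D(x₁+ε, x₂−ε). -/

import Mathlib

open MeasureTheory ProbabilityTheory Real
open scoped ENNReal

noncomputable section

/-- Binary Shannon entropy (base 2). -/
def hb (x : ℝ) : ℝ := -(x * Real.logb 2 x) - (1 - x) * Real.logb 2 (1 - x)

/-- The function `h_D`. -/
def hD (x₁ x₂ : ℝ) : ℝ := 2 * hb ((x₁ + x₂) / 2) - hb x₁ - hb x₂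

/-- The function `h_C`. -/
def hCfun (x₁ x₂ ε : ℝ) : ℝ :=
  sSup ((fun ε' => hb (min x₁ x₂ + ε') - hb (min x₁ x₂) + hb (max x₁ x₂ - ε') - hb (max x₁ x₂)) ''
    Set.Icc 0 (min ε ((max x₁ x₂ - min x₁ x₂) / 2)))

/-- Empirical error rate `L̂(y, yh)`. -/
def empErr {C n : ℕ} (y yh : Fin n → Fin C) : ℝ :=
  (n : ℝ)⁻¹ * ∑ i, (if yh i ≠ y i then (1 : ℝ) else 0)

/-- `‖p̂_y − p̂_{y′}‖₁`, the ℓ₁ distance between empirical label distributions. -/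
def empTV {C n : ℕ} (y y' : Fin n → Fin C) : ℝ :=
  ∑ c : Fin C, |(n : ℝ)⁻¹ * (∑ i, if y i = c then (1 : ℝ) else 0) -
      (n : ℝ)⁻¹ * (∑ i, if y' i = c then (1 : ℝ) else 0)|

open Classical in
/-- Kullback–Leibler divergence (in `ℝ≥0∞`). -/
def klDiv {α : Type*} [MeasurableSpace α] (μ ν : Measure α) : ℝ≥0∞ :=
  if μ ≪ ν ∧ Integrable (llr μ ν) μ then ENNReal.ofReal (∫ x, llr μ ν x ∂μ) else ∞

end

lemma hb_eq (x : ℝ) : hb x = binEntropy x / Real.log 2 := by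
  simp [hb, binEntropy, Real.logb, Real.log_inv]; ring

lemma hb_concave : ConcaveOn ℝ (Set.Icc (0:ℝ) 1) hb := by
  have h2 := strictConcave_binEntropy.concaveOn.smul (c := (Real.log 2)⁻¹) (by positivity)
  have hfe : hb = fun x => (Real.log 2)⁻¹ • binEntropy x := by
    funext x
    simp [hb_eq, smul_eq_mul, div_eq_inv_mul]
  rw [hfe]; exact h2

lemma hb_cont : Continuous hb := by
  have : hb = fun x => binEntropy x / Real.log 2 := funext hb_eq
  rw [this]; exact binEntropy_continuous.div_const _

lemma key_lemma (x₁ x₂ εt ε : ℝ) (hle : x₁ ≤ x₂)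
    (hεt : 0 ≤ εt) (h₁ : x₁ + ε ∈ Set.Icc (0 : ℝ) 1) (h₂ : x₂ - ε ∈ Set.Icc (0 : ℝ) 1)
    (hε : |ε| ≤ εt) :
    hb (x₁ + ε) + hb (x₂ - ε) - hb x₁ - hb x₂ ≤ hCfun x₁ x₂ εt := by
  have habs := abs_le.mp hε
  obtain ⟨ts, hts⟩ : ∃ t : ℝ, t = (x₂ - x₁) / 2 := ⟨_, rfl⟩
  have hts0 : 0 ≤ ts := by rw [hts]; linarith
  obtain ⟨c, hc⟩ : ∃ t : ℝ, t = min εt ts := ⟨_, rfl⟩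
  have hc0 : 0 ≤ c := hc ▸ le_min hεt hts0
  obtain ⟨ε', hε'⟩ : ∃ t : ℝ, t = max 0 (min ε c) := ⟨_, rfl⟩
  have hε'0 : 0 ≤ ε' := hε' ▸ le_max_left _ _
  have hε'c : ε' ≤ c := hε' ▸ max_le hc0 (min_le_right _ _)
  obtain ⟨a, ha⟩ : ∃ t : ℝ, t = ε := ⟨_, rfl⟩
  obtain ⟨b, hb'⟩ : ∃ t : ℝ, t = 2 * ts - ε := ⟨_, rfl⟩
  have hab : x₁ + b = x₂ - ε := by rw [hb', hts]; ring
  have hab2 : x₂ - b = x₁ + ε := by rw [hb', hts]; ring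
  -- ε' lies between a and b
  have hmem : ε' ∈ Set.Icc (min a b) (max a b) := by
    rcases lt_or_ge ε 0 with hneg | hpos
    · have he0 : ε' = 0 := by
        rw [hε', max_eq_left]
        exact le_trans (min_le_left _ _) hneg.le
      rw [he0]
      constructor
      · refine le_trans (min_le_left _ _) ?_; rw [ha]; exact hneg.le
      · refine le_trans ?_ (le_max_right _ _); rw [hb']; linarith
    rcases le_or_gt ε c with hec | hce
    · have he : ε' = ε := by rw [hε', min_eq_left hec, max_eq_right hpos]
      rw [he, ← ha]
      exact ⟨min_le_left _ _, le_max_left _ _⟩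
    · have hts_le : ts ≤ εt := by
        by_contra hcon; push_neg at hcon
        rw [hc, min_eq_left hcon.le] at hce
        linarith [habs.2]
      have hcts : c = ts := by rw [hc]; exact min_eq_right hts_le
      have he : ε' = ts := by
        rw [hε', min_eq_right hce.le, max_eq_right hc0, hcts]
      rw [he]
      have hcelt : ts < ε := hcts ▸ hce
      constructor
      · refine le_trans (min_le_right _ _) ?_; rw [hb']; linarith
      · refine le_trans ?_ (le_max_left _ _); rw [ha]; linarith
  -- concavity of g on Icc (min a b) (max a b)
  have hgconc : ConcaveOn ℝ (Set.Icc (min a b) (max a b))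
      (fun t => hb (x₁ + t) + hb (x₂ - t)) := by
    constructor
    · exact convex_Icc _ _
    · intro u hu v hv p q hp hq hpq
      simp only [smul_eq_mul]
      have memx : ∀ t ∈ Set.Icc (min a b) (max a b), x₁ + t ∈ Set.Icc (0:ℝ) 1 ∧
          x₂ - t ∈ Set.Icc (0:ℝ) 1 := by
        intro t ht
        have h1 : min a b ≤ t := ht.1
        have h2 : t ≤ max a b := ht.2
        rcases le_total a b with h | h
        · rw [min_eq_left h] at h1; rw [max_eq_right h] at h2
          constructor <;> constructor <;>
            linarith [h₁.1, h₁.2, h₂.1, h₂.2, hab, hab2, ha ▸ h1, ha ▸ h]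
        · rw [min_eq_right h] at h1; rw [max_eq_left h] at h2
          constructor <;> constructor <;>
            linarith [h₁.1, h₁.2, h₂.1, h₂.2, hab, hab2, ha ▸ h2, ha ▸ h]
      obtain ⟨hu1, hu2⟩ := memx u hu
      obtain ⟨hv1, hv2⟩ := memx v hv
      have c1 := hb_concave.2 hu1 hv1 hp hq hpq
      have c2 := hb_concave.2 hu2 hv2 hp hq hpq
      simp only [smul_eq_mul] at c1 c2
      have e1 : x₁ + (p * u + q * v) = p * (x₁ + u) + q * (x₁ + v) := by
        linear_combination (-x₁) * hpq
      have e2 : x₂ - (p * u + q * v) = p * (x₂ - u) + q * (x₂ - v) := by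
        linear_combination (-x₂) * hpq
      simp only [e1, e2]
      linarith
  -- g ε' ≥ g a
  have hga : hb (x₁ + ε) + hb (x₂ - ε) ≤ hb (x₁ + ε') + hb (x₂ - ε') := by
    have h1 : min a b ∈ Set.Icc (min a b) (max a b) := ⟨le_refl _, min_le_max⟩
    have h2 : max a b ∈ Set.Icc (min a b) (max a b) := ⟨min_le_max, le_refl _⟩
    have heq : hb (x₁ + a) + hb (x₂ - a) = hb (x₁ + b) + hb (x₂ - b) := by
      rw [hab, hab2, ha]; ring
    have hmm := hgconc.min_le_of_mem_Icc h1 h2 hmem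
    have hminmax : min (hb (x₁ + min a b) + hb (x₂ - min a b))
        (hb (x₁ + max a b) + hb (x₂ - max a b)) = hb (x₁ + a) + hb (x₂ - a) := by
      rcases le_total a b with h | h
      · rw [min_eq_left h, max_eq_right h, heq, min_self]
      · rw [min_eq_right h, max_eq_left h, heq, min_self]
    rw [hminmax, ha] at hmm
    exact hmm
  -- relate to hCfun
  have hminx : min x₁ x₂ = x₁ := min_eq_left hle
  have hmaxx : max x₁ x₂ = x₂ := max_eq_right hle
  have hbdd : BddAbove ((fun e => hb (x₁ + e) - hb x₁ + hb (x₂ - e) - hb x₂) ''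
      Set.Icc 0 (min εt ((x₂ - x₁) / 2))) := by
    apply IsCompact.bddAbove_image isCompact_Icc
    exact ((((hb_cont.comp (continuous_const.add continuous_id)).sub continuous_const).add
      (hb_cont.comp (continuous_const.sub continuous_id))).sub continuous_const).continuousOn
  have hmem2 : (hb (x₁ + ε') - hb x₁ + hb (x₂ - ε') - hb x₂) ∈
      ((fun e => hb (x₁ + e) - hb x₁ + hb (x₂ - e) - hb x₂) ''
      Set.Icc 0 (min εt ((x₂ - x₁) / 2))) := by
    refine ⟨ε', ⟨hε'0, ?_⟩, rfl⟩
    rw [← hts, ← hc]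
    exact hε'c
  have hle2 := le_csSup hbdd hmem2
  rw [hCfun, hminx, hmaxx]
  linarith

/-- For all `x₁, x₂ ∈ [0,1]`, `ε̃ ≥ 0` and `ε ∈ ℝ` with `x₁+ε ∈ [0,1]`, `x₂−ε ∈ [0,1]` and
`|ε| ≤ ε̃`, one has `h_D(x₁,x₂) − h_C(x₁,x₂;ε̃) ≤ h_D(x₁+ε, x₂−ε)`. -/
theorem hD_sub_hC_le_hD_shift
    (x₁ x₂ εt ε : ℝ) (hx₁ : x₁ ∈ Set.Icc (0 : ℝ) 1) (hx₂ : x₂ ∈ Set.Icc (0 : ℝ) 1)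
    (hεt : 0 ≤ εt) (h₁ : x₁ + ε ∈ Set.Icc (0 : ℝ) 1) (h₂ : x₂ - ε ∈ Set.Icc (0 : ℝ) 1)
    (hε : |ε| ≤ εt) :
    hD x₁ x₂ - hCfun x₁ x₂ εt ≤ hD (x₁ + ε) (x₂ - ε) := by
  simp only [hD]
  have hmid : (x₁ + ε + (x₂ - ε)) / 2 = (x₁ + x₂) / 2 := by ring
  rw [hmid]
  rcases le_total x₁ x₂ with h | h
  · have := key_lemma x₁ x₂ εt ε h hεt h₁ h₂ hε
    linarith
  · have h₁' : x₂ + -ε ∈ Set.Icc (0:ℝ) 1 := by rw [← sub_eq_add_neg]; exact h₂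
    have h₂' : x₁ - -ε ∈ Set.Icc (0:ℝ) 1 := by rw [sub_neg_eq_add]; exact h₁
    have hε' : |-ε| ≤ εt := by rwa [abs_neg]
    have hk := key_lemma x₂ x₁ εt (-ε) h hεt h₁' h₂' hε'
    have hsymm : hCfun x₂ x₁ εt = hCfun x₁ x₂ εt := by
      rw [hCfun, hCfun, min_comm, max_comm]
    rw [hsymm, ← sub_eq_add_neg, sub_neg_eq_add] at hk
    linarith
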